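/- arXiv:1103.1330 — 4 statements merged into one kernel-verified Lean document; each statement's English description precedes it below -/
import Mathlib

section
/- For all 0 < p, q < ∞ and 0 < r, e < ∞, the Lorentz sequence space ℓ_{p,r+e} is strictly contained in ℓ_{q,r}. -/
/-!
For a non-negative non-increasing sequence `h`, comparing the block `n ≤ k ≤ 2n` of the series
`∑ (k+1)^(β-1) h k` with its smallest term shows that `(n+1)^β h n` stays bounded. Applied to
`h = (a*)^p` this gives `a*_n ≲ (n+1)^(-(r+e))` for `a ∈ ℓ_{p,r+e}`, and then the series defining
`ℓ_{q,r}` is dominated by `∑ (n+1)^(-eq-1) < ∞`. The sequence `(n+1)^(-(r+e))` is its own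
rearrangement; it lies in `ℓ_{q,r}`, but its series for `ℓ_{p,r+e}` is the harmonic series.
-/

open Real

/-- `rearr a n` is the `(n+1)`-st term `a*_{n+1}` of the non-increasing
rearrangement of `(|a m|)`. -/
noncomputable def rearr (a : ℕ → ℝ) (n : ℕ) : ℝ :=
  sInf {t : ℝ | 0 ≤ t ∧ {m : ℕ | t < |a m|}.Finite ∧ Nat.card {m : ℕ | t < |a m|} ≤ n}

/-- Membership in the Lorentz sequence space `ℓ_{p,r}`:  bounded sequences with
`∑_{n=1}^∞ n^{rp-1}(a_n^*)^p < ∞`. -/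
def MemLorentz (p r : ℝ) (a : ℕ → ℝ) : Prop :=
  (∃ M, ∀ n, |a n| ≤ M) ∧
    Summable (fun n : ℕ => ((n : ℝ) + 1) ^ (r * p - 1) * rearr a n ^ p)

lemma rpow_le_two_rpow_abs_mul_rpow {x y : ℝ} (γ : ℝ) (hy : 0 < y) (hxy : x ≤ 2 * y)
    (hyx : y ≤ 2 * x) : x ^ γ ≤ 2 ^ |γ| * y ^ γ := by
  have hx : 0 < x := by linarith
  rcases le_total 0 γ with hγ | hγ
  · calc x ^ γ ≤ (2 * y) ^ γ := rpow_le_rpow hx.le hxy hγ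
      _ = 2 ^ |γ| * y ^ γ := by rw [abs_of_nonneg hγ, mul_rpow zero_le_two hy.le]
  · calc x ^ γ ≤ (y / 2) ^ γ := rpow_le_rpow_of_nonpos (by positivity) (by linarith) hγ
      _ = 2 ^ |γ| * y ^ γ := by
        rw [abs_of_nonpos hγ, div_rpow hy.le zero_le_two, rpow_neg zero_le_two, div_eq_inv_mul]

lemma summable_nat_add_one_rpow_iff {s : ℝ} :
    Summable (fun n : ℕ => ((n : ℝ) + 1) ^ s) ↔ s < -1 := by
  have := (summable_nat_add_iff 1 (f := fun n : ℕ => (n : ℝ) ^ s)).trans summable_nat_rpow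
  push_cast at this
  exact this

lemma exists_rpow_mul_le_of_summable {h : ℕ → ℝ} (h0 : ∀ n, 0 ≤ h n) (hh : Antitone h)
    {β : ℝ} (hs : Summable fun n : ℕ => ((n : ℝ) + 1) ^ (β - 1) * h n) :
    ∃ C, ∀ n : ℕ, ((n : ℝ) + 1) ^ β * h n ≤ C := by
  set S := ∑' n : ℕ, ((n : ℝ) + 1) ^ (β - 1) * h n
  have hblock : ∀ n : ℕ, ((n : ℝ) + 1) ^ β * h (2 * n) ≤ 2 ^ |β - 1| * S := by
    intro n
    have hterm : ∀ k ∈ Finset.Ico n (2 * n + 1),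
        ((n : ℝ) + 1) ^ (β - 1) * h (2 * n) ≤ 2 ^ |β - 1| * (((k : ℝ) + 1) ^ (β - 1) * h k) := by
      intro k hk
      obtain ⟨hnk, hk2n⟩ := Finset.mem_Ico.1 hk
      have hpow := rpow_le_two_rpow_abs_mul_rpow (β - 1) (x := (n : ℝ) + 1) (y := (k : ℝ) + 1)
        (by positivity) (by norm_cast; omega) (by norm_cast; omega)
      rw [← mul_assoc]
      exact mul_le_mul hpow (hh (by omega)) (h0 _) (by positivity)
    calc ((n : ℝ) + 1) ^ β * h (2 * n)
        = ∑ _k ∈ Finset.Ico n (2 * n + 1), ((n : ℝ) + 1) ^ (β - 1) * h (2 * n) := by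
          rw [Finset.sum_const, Nat.card_Ico, show 2 * n + 1 - n = n + 1 by omega, nsmul_eq_mul,
            Nat.cast_succ, ← sub_add_cancel β 1, rpow_add_one (by positivity), add_sub_cancel_right]
          ring
      _ ≤ ∑ k ∈ Finset.Ico n (2 * n + 1), 2 ^ |β - 1| * (((k : ℝ) + 1) ^ (β - 1) * h k) :=
          Finset.sum_le_sum hterm
      _ ≤ 2 ^ |β - 1| * S := by
          rw [← Finset.mul_sum]
          exact mul_le_mul_of_nonneg_left
            (hs.sum_le_tsum _ fun k _ => mul_nonneg (by positivity) (h0 k)) (by positivity)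
  refine ⟨2 ^ |β| * (2 ^ |β - 1| * S), fun m => ?_⟩
  have hpow := rpow_le_two_rpow_abs_mul_rpow β (x := (m : ℝ) + 1) (y := ((m / 2 : ℕ) : ℝ) + 1)
    (by positivity) (by norm_cast; omega) (by norm_cast; omega)
  calc ((m : ℝ) + 1) ^ β * h m
      ≤ 2 ^ |β| * (((m / 2 : ℕ) : ℝ) + 1) ^ β * h (2 * (m / 2)) :=
        mul_le_mul hpow (hh (by omega)) (h0 m) (by positivity)
    _ ≤ 2 ^ |β| * (2 ^ |β - 1| * S) := by
        rw [mul_assoc]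
        exact mul_le_mul_of_nonneg_left (hblock _) (by positivity)

lemma rearr_nonneg (a : ℕ → ℝ) (n : ℕ) : 0 ≤ rearr a n :=
  Real.sInf_nonneg fun _ ht => ht.1

lemma rearr_antitone {a : ℕ → ℝ} {M : ℝ} (hM : ∀ n, |a n| ≤ M) : Antitone (rearr a) := by
  intro n m hnm
  have hM_mem : M ∈ {t : ℝ | 0 ≤ t ∧ {m : ℕ | t < |a m|}.Finite ∧
      Nat.card {m : ℕ | t < |a m|} ≤ n} := by
    have hempty : {m : ℕ | M < |a m|} = ∅ := by
      ext m
      simpa using hM m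
    exact ⟨(abs_nonneg _).trans (hM 0), by simp [hempty], by simp [hempty]⟩
  exact csInf_le_csInf ⟨0, fun _ ht => ht.1⟩ ⟨M, hM_mem⟩
    fun t ⟨ht0, hfin, hcard⟩ => ⟨ht0, hfin, hcard.trans hnm⟩

lemma rearr_eq_of_antitone {a : ℕ → ℝ} (ha : Antitone a) (h0 : ∀ n, 0 ≤ a n) :
    rearr a = a := by
  funext n
  simp only [rearr, abs_of_nonneg (h0 _)]
  have hsub : ∀ t, a n ≤ t → {m : ℕ | t < a m} ⊆ Set.Iio n := fun t ht m hm =>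
    lt_of_not_ge fun hnm => (ht.trans_lt hm).not_ge (ha hnm)
  have hmem : a n ∈ {t : ℝ | 0 ≤ t ∧ {m : ℕ | t < a m}.Finite ∧
      Nat.card {m : ℕ | t < a m} ≤ n} := by
    refine ⟨h0 n, (Set.finite_Iio n).subset (hsub _ le_rfl), ?_⟩
    rw [Nat.card_coe_set_eq]
    exact (Set.ncard_le_ncard (hsub _ le_rfl) (Set.finite_Iio n)).trans_eq (Set.ncard_Iio_nat n)
  refine le_antisymm (csInf_le ⟨0, fun _ ht => ht.1⟩ hmem) (le_csInf ⟨a n, hmem⟩ ?_)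
  rintro t ⟨-, hfin, hcard⟩
  by_contra! htn
  have hIic : Set.Iic n ⊆ {m : ℕ | t < a m} := fun m hm => htn.trans_le (ha hm)
  have := Set.ncard_le_ncard hIic hfin
  rw [Set.ncard_Iic_nat, ← Nat.card_coe_set_eq] at this
  omega

lemma MemLorentz.exists_rpow_mul_rearr_le {p r : ℝ} {a : ℕ → ℝ} (hp : 0 < p)
    (ha : MemLorentz p r a) : ∃ C, ∀ n : ℕ, ((n : ℝ) + 1) ^ r * rearr a n ≤ C := by
  obtain ⟨⟨M, hM⟩, hs⟩ := ha
  have hanti : Antitone fun n => rearr a n ^ p := fun n m hnm =>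
    rpow_le_rpow (rearr_nonneg a m) (rearr_antitone hM hnm) hp.le
  obtain ⟨C, hC⟩ := exists_rpow_mul_le_of_summable (fun n => by positivity [rearr_nonneg a n])
    hanti (β := r * p) hs
  refine ⟨C ^ p⁻¹, fun n => ?_⟩
  have hbase : 0 ≤ ((n : ℝ) + 1) ^ r * rearr a n := by positivity [rearr_nonneg a n]
  rw [← rpow_rpow_inv hbase hp.ne']
  refine rpow_le_rpow (by positivity) ?_ (inv_nonneg.2 hp.le)
  rw [mul_rpow (by positivity) (rearr_nonneg a n), ← rpow_mul (by positivity)]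
  exact hC n

lemma MemLorentz.of_add {p q r e : ℝ} {a : ℕ → ℝ} (hp : 0 < p) (hq : 0 < q) (he : 0 < e)
    (ha : MemLorentz p (r + e) a) : MemLorentz q r a := by
  obtain ⟨C, hC⟩ := ha.exists_rpow_mul_rearr_le hp
  refine ⟨ha.1, Summable.of_nonneg_of_le (fun n => by positivity [rearr_nonneg a n])
    (fun n => ?_) (((summable_nat_add_one_rpow_iff (s := -(e * q) - 1)).2
      (by nlinarith)).mul_right (C ^ q))⟩
  have hx : (0 : ℝ) < n + 1 := by positivity
  have hbase : 0 ≤ ((n : ℝ) + 1) ^ (r + e) * rearr a n := by positivity [rearr_nonneg a n]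
  calc ((n : ℝ) + 1) ^ (r * q - 1) * rearr a n ^ q
      = ((n : ℝ) + 1) ^ (-(e * q) - 1) * (((n : ℝ) + 1) ^ (r + e) * rearr a n) ^ q := by
        rw [mul_rpow (by positivity) (rearr_nonneg a n), ← rpow_mul hx.le, ← mul_assoc,
          ← rpow_add hx]
        ring_nf
    _ ≤ ((n : ℝ) + 1) ^ (-(e * q) - 1) * C ^ q :=
        mul_le_mul_of_nonneg_left (rpow_le_rpow hbase (hC n) hq.le) (by positivity)

lemma memLorentz_nat_add_one_rpow_neg_iff {p r s : ℝ} (hs : 0 ≤ s) :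
    MemLorentz p r (fun n : ℕ => ((n : ℝ) + 1) ^ (-s)) ↔ r * p < s * p := by
  have hanti : Antitone fun n : ℕ => ((n : ℝ) + 1) ^ (-s) := fun m n hmn =>
    rpow_le_rpow_of_nonpos (by positivity) (by gcongr) (by linarith)
  have hbdd : ∀ n : ℕ, |((n : ℝ) + 1) ^ (-s)| ≤ 1 := fun n => by
    simpa [abs_of_nonneg (by positivity : (0 : ℝ) ≤ ((n : ℝ) + 1) ^ (-s))]
      using hanti (Nat.zero_le n)
  have hexp : r * p - 1 + -s * p < -1 ↔ r * p < s * p := by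
    constructor <;> intro <;> linarith
  rw [MemLorentz, rearr_eq_of_antitone hanti fun n => by positivity, and_iff_right ⟨1, hbdd⟩,
    ← hexp, ← summable_nat_add_one_rpow_iff]
  exact summable_congr fun n => by rw [← rpow_mul (by positivity), ← rpow_add (by positivity)]

theorem stmt_2 (p q r e : ℝ) (hp : 0 < p) (hq : 0 < q) (hr : 0 < r) (he : 0 < e) :
    {a : ℕ → ℝ | MemLorentz p (r + e) a} ⊂ {a : ℕ → ℝ | MemLorentz q r a} := by
  refine ⟨fun a ha => MemLorentz.of_add hp hq he ha, fun hsub => ?_⟩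
  have hs : 0 ≤ r + e := by positivity
  have hmem : MemLorentz q r fun n : ℕ => ((n : ℝ) + 1) ^ (-(r + e)) :=
    (memLorentz_nat_add_one_rpow_neg_iff hs).2 (by nlinarith)
  exact lt_irrefl _ ((memLorentz_nat_add_one_rpow_neg_iff hs).1 (hsub hmem))
end

section
/- Let α > 1 and C > 1. Let S be a rearrangement-invariant solid quasi-normed sequence space such that: if (a_n) is non-increasing, non-negative, and (a_{⌈αn⌉}) ∈ S, then (a_n) ∈ S. Then for every non-increasing non-negative sequence (a_n): (a_n) ∈ S if and only if (a_{⌊n/C⌋}) ∈ S. -/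
/-!
Choose `k` with `C < α ^ k`. Precomposing `b n = a ⌊n / C⌋` with the `k`-th iterate of
`n ↦ ⌈α n⌉` moves every index to at least `n`, so the result lies below `a` and, by solidity,
in `S` whenever `a` does; the dilation property, applied `k` times, then puts `b` in `S`.
The converse is solidity alone, as `⌊n / C⌋ ≤ n`.
-/

open Function

section SequenceSpace

variable {S : Set (ℕ → ℝ)} {a : ℕ → ℝ}

theorem comp_mem_of_le_of_comp_mem
    (h_solid : ∀ a b : ℕ → ℝ, (∀ n, 0 ≤ a n ∧ a n ≤ b n) → b ∈ S → a ∈ S)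
    (ha : Antitone a) (ha0 : 0 ≤ a) {f f' : ℕ → ℕ} (hf : ∀ n, f' n ≤ f n)
    (h : a ∘ f' ∈ S) : a ∘ f ∈ S :=
  h_solid _ _ (fun n => ⟨ha0 _, ha (hf n)⟩) h

theorem mem_of_comp_iterate_mem {g : ℕ → ℕ} (hg : Monotone g)
    (h_dil : ∀ b : ℕ → ℝ, Antitone b → 0 ≤ b → b ∘ g ∈ S → b ∈ S) (k : ℕ)
    (ha : Antitone a) (ha0 : 0 ≤ a) (h : a ∘ g^[k] ∈ S) : a ∈ S := by
  induction k with
  | zero => exact h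
  | succ k ih =>
    exact ih (h_dil _ (ha.comp_monotone (hg.iterate k)) (fun n => ha0 (g^[k] n)) h)

end SequenceSpace

section CeilDilation

variable {α : ℝ}

theorem monotone_ceil_mul (hα : 0 ≤ α) : Monotone fun n : ℕ => ⌈α * n⌉₊ :=
  fun _ _ hmn => Nat.ceil_le_ceil (by gcongr)

theorem pow_mul_le_iterate_ceil_mul (hα : 0 ≤ α) (k n : ℕ) :
    α ^ k * n ≤ ((fun m : ℕ => ⌈α * m⌉₊)^[k] n : ℝ) := by
  induction k with
  | zero => simp
  | succ k ih =>
    rw [iterate_succ_apply']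
    calc α ^ (k + 1) * n = α * (α ^ k * n) := by ring
      _ ≤ α * ((fun m : ℕ => ⌈α * m⌉₊)^[k] n : ℝ) := by gcongr
      _ ≤ _ := Nat.le_ceil _

theorem exists_le_floor_iterate_ceil_mul_div (hα : 1 < α) {C : ℝ} (hC : 0 < C) :
    ∃ k : ℕ, ∀ n : ℕ, n ≤ ⌊((fun m : ℕ => ⌈α * m⌉₊)^[k] n : ℝ) / C⌋₊ := by
  obtain ⟨k, hk⟩ := pow_unbounded_of_one_lt C hα
  refine ⟨k, fun n => Nat.le_floor ?_⟩
  rw [le_div_iff₀ hC]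
  calc (n : ℝ) * C ≤ α ^ k * n := by rw [mul_comm]; gcongr
    _ ≤ _ := pow_mul_le_iterate_ceil_mul (zero_le_one.trans hα.le) k n

end CeilDilation

theorem stmt_6_general (α C : ℝ) (hα : 1 < α) (hC : 1 < C) (S : Set (ℕ → ℝ))
    -- `S` is solid:
    (h_solid : ∀ a b : ℕ → ℝ, (∀ n, 0 ≤ a n ∧ a n ≤ b n) → b ∈ S → a ∈ S)
    -- dilation property of `S` for the jump function `K(n) = αn`:
    (h_dil : ∀ a : ℕ → ℝ, (∀ n, a (n + 1) ≤ a n) → (∀ n, 0 ≤ a n) →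
      (fun n : ℕ => a (Nat.ceil (α * n))) ∈ S → a ∈ S) :
    ∀ a : ℕ → ℝ, (∀ n, a (n + 1) ≤ a n) → (∀ n, 0 ≤ a n) →
      (a ∈ S ↔ (fun n : ℕ => a (Nat.floor ((n : ℝ) / C))) ∈ S) := by
  intro a ha ha0
  have haA : Antitone a := antitone_nat_of_succ_le ha
  have hα0 : 0 ≤ α := zero_le_one.trans hα.le
  have hfloor : Monotone fun n : ℕ => ⌊(n : ℝ) / C⌋₊ :=
    fun _ _ hmn => Nat.floor_le_floor (by gcongr)
  constructor
  · intro haS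
    obtain ⟨k, hk⟩ := exists_le_floor_iterate_ceil_mul_div hα (zero_lt_one.trans hC)
    refine mem_of_comp_iterate_mem (monotone_ceil_mul hα0)
      (fun b hb hb0 => h_dil b (fun n => hb n.le_succ) hb0) k (haA.comp_monotone hfloor)
      (fun n => ha0 _) ?_
    exact comp_mem_of_le_of_comp_mem (f' := id) h_solid haA ha0 hk haS
  · intro h
    refine comp_mem_of_le_of_comp_mem (f := id) h_solid haA ha0 (fun n => ?_) h
    calc ⌊(n : ℝ) / C⌋₊ ≤ ⌊(n : ℝ)⌋₊ := Nat.floor_le_floor (div_le_self n.cast_nonneg hC.le)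
      _ = n := Nat.floor_natCast n

theorem stmt_6 (α C : ℝ) (hα : 1 < α) (hC : 1 < C) (S : Set (ℕ → ℝ))
    -- `S` is solid:
    (h_solid : ∀ a b : ℕ → ℝ, (∀ n, 0 ≤ a n ∧ a n ≤ b n) → b ∈ S → a ∈ S)
    -- `S` is rearrangement invariant:
    (h_ri : ∀ a : ℕ → ℝ, a ∈ S ↔ rearr a ∈ S)
    -- dilation property of `S` for the jump function `K(n) = αn`:
    (h_dil : ∀ a : ℕ → ℝ, (∀ n, a (n + 1) ≤ a n) → (∀ n, 0 ≤ a n) →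
      (fun n : ℕ => a (Nat.ceil (α * n))) ∈ S → a ∈ S) :
    ∀ a : ℕ → ℝ, (∀ n, a (n + 1) ≤ a n) → (∀ n, 0 ≤ a n) →
      (a ∈ S ↔ (fun n : ℕ => a (Nat.floor ((n : ℝ) / C))) ∈ S) :=
  stmt_6_general α C hα hC S h_solid h_dil
end

section
/- Let Y be a quasi-semi-normed subspace of a quasi-Banach space X with K-functional K(x,t) = inf_{y∈Y}(‖x−y‖_X + t‖y‖_Y). Suppose there is c > 0 with sup_{‖x‖=1} K(x,t) > c for all t ∈ (0,1]. Then for every sequence (b_n) of non-negative reals with b_n → ∞ and every strictly decreasing positive null sequence (t_n), the set A((b_n),(t_n)) = {x ∈ X : sup_{n≥1} b_n K(x,t_n) < ∞} is a proper subset of X. -/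
open Filter Set

/-- The Peetre `K`-functional `K(x,t) = inf_{y ∈ Y} (‖x-y‖_X + t‖y‖_Y)`, where the
quasi-semi-norm of the subspace `Y` is given by `ν`. -/
noncomputable def Kf {X : Type*} [NormedAddCommGroup X] [NormedSpace ℝ X]
    (Y : Submodule ℝ X) (ν : X → ℝ) (x : X) (t : ℝ) : ℝ :=
  sInf {r : ℝ | ∃ y ∈ Y, r = ‖x - y‖ + t * ν y}

/-- `sup_{‖x‖_X = 1} K(x,t)`. -/
noncomputable def Ksup {X : Type*} [NormedAddCommGroup X] [NormedSpace ℝ X]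
    (Y : Submodule ℝ X) (ν : X → ℝ) (t : ℝ) : ℝ :=
  sSup {r : ℝ | ∃ x : X, ‖x‖ = 1 ∧ r = Kf Y ν x t}

/-!
If `A((b_n),(t_n))` were all of `X`, then by the Baire category theorem one of the closed sets
`{x | ∀ n, b_n K(x,t_n) ≤ m}` would contain a ball `B(x₀,r)`. Since `K(·,t)` is a quasi-semi-norm
on `X`, boundedness on a ball gives `sup_{‖x‖=1} K(x,t_n) ≤ 4κm / (r b_n)`, which tends to `0`
and contradicts condition (a).
-/

section KFunctional

variable {X : Type*} [NormedAddCommGroup X] [NormedSpace ℝ X] {Y : Submodule ℝ X} {ν : X → ℝ}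
  {x x' : X} {t : ℝ}

theorem Kf_le (hν0 : ∀ y ∈ Y, 0 ≤ ν y) (ht : 0 ≤ t) {y : X} (hy : y ∈ Y) :
    Kf Y ν x t ≤ ‖x - y‖ + t * ν y := by
  refine csInf_le ⟨0, ?_⟩ ⟨y, hy, rfl⟩
  rintro _ ⟨z, hz, rfl⟩
  have := hν0 z hz
  positivity

theorem le_Kf {a : ℝ} (h : ∀ y ∈ Y, a ≤ ‖x - y‖ + t * ν y) : a ≤ Kf Y ν x t :=
  le_csInf ⟨_, 0, Y.zero_mem, rfl⟩ (by rintro _ ⟨y, hy, rfl⟩; exact h y hy)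

theorem Kf_nonneg (hν0 : ∀ y ∈ Y, 0 ≤ ν y) (ht : 0 ≤ t) : 0 ≤ Kf Y ν x t :=
  le_Kf fun y hy => by have := hν0 y hy; positivity

theorem Kf_le_Kf_add_dist (hν0 : ∀ y ∈ Y, 0 ≤ ν y) (ht : 0 ≤ t) (x x' : X) :
    Kf Y ν x t ≤ Kf Y ν x' t + dist x x' := by
  suffices Kf Y ν x t - ‖x - x'‖ ≤ Kf Y ν x' t by rw [dist_eq_norm]; linarith
  refine le_Kf fun y hy => ?_
  have := Kf_le (x := x) hν0 ht hy
  have := norm_sub_le_norm_sub_add_norm_sub x x' y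
  linarith

theorem lipschitzWith_Kf (hν0 : ∀ y ∈ Y, 0 ≤ ν y) (ht : 0 ≤ t) :
    LipschitzWith 1 fun x => Kf Y ν x t :=
  LipschitzWith.of_le_add (Kf_le_Kf_add_dist hν0 ht)

theorem Kf_smul_le (hν0 : ∀ y ∈ Y, 0 ≤ ν y) (hνh : ∀ (c : ℝ), ∀ y ∈ Y, ν (c • y) = |c| * ν y)
    (ht : 0 ≤ t) {c : ℝ} (hc : c ≠ 0) (x : X) : Kf Y ν (c • x) t ≤ |c| * Kf Y ν x t := by
  have hc' : 0 < |c| := abs_pos.mpr hc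
  suffices Kf Y ν (c • x) t / |c| ≤ Kf Y ν x t by rwa [div_le_iff₀' hc'] at this
  refine le_Kf fun y hy => ?_
  have := Kf_le (x := c • x) hν0 ht (Y.smul_mem c hy)
  rw [← smul_sub, norm_smul, Real.norm_eq_abs, hνh c y hy] at this
  rw [div_le_iff₀' hc']
  linarith

theorem Kf_smul (hν0 : ∀ y ∈ Y, 0 ≤ ν y) (hνh : ∀ (c : ℝ), ∀ y ∈ Y, ν (c • y) = |c| * ν y)
    (ht : 0 ≤ t) {c : ℝ} (hc : c ≠ 0) (x : X) : Kf Y ν (c • x) t = |c| * Kf Y ν x t := by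
  refine (Kf_smul_le hν0 hνh ht hc x).antisymm ?_
  have := Kf_smul_le hν0 hνh ht (inv_ne_zero hc) (c • x)
  rwa [inv_smul_smul₀ hc, abs_inv, le_inv_mul_iff₀ (abs_pos.mpr hc)] at this

theorem Kf_neg (hν0 : ∀ y ∈ Y, 0 ≤ ν y) (hνh : ∀ (c : ℝ), ∀ y ∈ Y, ν (c • y) = |c| * ν y)
    (ht : 0 ≤ t) (x : X) : Kf Y ν (-x) t = Kf Y ν x t := by
  simpa using Kf_smul hν0 hνh ht (neg_ne_zero.mpr one_ne_zero) x

theorem Kf_add_le (hν0 : ∀ y ∈ Y, 0 ≤ ν y) {κ : ℝ} (hκ : 1 ≤ κ)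
    (hνt : ∀ y ∈ Y, ∀ z ∈ Y, ν (y + z) ≤ κ * (ν y + ν z)) (ht : 0 ≤ t) (x x' : X) :
    Kf Y ν (x + x') t ≤ κ * (Kf Y ν x t + Kf Y ν x' t) := by
  have hκ0 : 0 < κ := one_pos.trans_le hκ
  have key : ∀ y ∈ Y, ∀ z ∈ Y,
      Kf Y ν (x + x') t ≤ κ * ((‖x - y‖ + t * ν y) + (‖x' - z‖ + t * ν z)) := by
    intro y hy z hz
    have h₁ := Kf_le (x := x + x') hν0 ht (Y.add_mem hy hz)
    have h₂ : ‖x + x' - (y + z)‖ ≤ ‖x - y‖ + ‖x' - z‖ := by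
      rw [add_sub_add_comm]; exact norm_add_le _ _
    have h₃ := mul_le_mul_of_nonneg_left (hνt y hy z hz) ht
    have h₄ := mul_le_mul_of_nonneg_right hκ
      (add_nonneg (norm_nonneg (x - y)) (norm_nonneg (x' - z)))
    linarith
  suffices Kf Y ν (x + x') t / κ - Kf Y ν x' t ≤ Kf Y ν x t by
    rw [div_sub' hκ0.ne', div_le_iff₀ hκ0] at this; linarith
  refine le_Kf fun y hy => ?_
  suffices Kf Y ν (x + x') t / κ - (‖x - y‖ + t * ν y) ≤ Kf Y ν x' t by linarith
  refine le_Kf fun z hz => ?_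
  rw [sub_le_iff_le_add, div_le_iff₀' hκ0]
  linarith [key y hy z hz]

theorem Kf_sub_le (hν0 : ∀ y ∈ Y, 0 ≤ ν y) (hνh : ∀ (c : ℝ), ∀ y ∈ Y, ν (c • y) = |c| * ν y)
    {κ : ℝ} (hκ : 1 ≤ κ) (hνt : ∀ y ∈ Y, ∀ z ∈ Y, ν (y + z) ≤ κ * (ν y + ν z)) (ht : 0 ≤ t)
    (x x' : X) : Kf Y ν (x - x') t ≤ κ * (Kf Y ν x t + Kf Y ν x' t) := by
  simpa [sub_eq_add_neg, Kf_neg hν0 hνh ht] using Kf_add_le hν0 hκ hνt ht x (-x')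

theorem Ksup_le_of_Kf_le_on_ball (hν0 : ∀ y ∈ Y, 0 ≤ ν y)
    (hνh : ∀ (c : ℝ), ∀ y ∈ Y, ν (c • y) = |c| * ν y) {κ : ℝ} (hκ : 1 ≤ κ)
    (hνt : ∀ y ∈ Y, ∀ z ∈ Y, ν (y + z) ≤ κ * (ν y + ν z)) (ht : 0 ≤ t) {x₀ : X} {r M : ℝ}
    (hr : 0 < r) (hM : ∀ x ∈ Metric.ball x₀ r, Kf Y ν x t ≤ M) :
    Ksup Y ν t ≤ 4 * κ * M / r := by
  have hM₀ : 0 ≤ M := (Kf_nonneg hν0 ht).trans (hM x₀ (Metric.mem_ball_self hr))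
  refine Real.sSup_le ?_ (by positivity)
  rintro _ ⟨x, hx, rfl⟩
  have hr₂ : r / 2 ≠ 0 := by positivity
  have hmem : x₀ + (r / 2) • x ∈ Metric.ball x₀ r := by
    rw [Metric.mem_ball, dist_self_add_left, norm_smul, hx, Real.norm_of_nonneg (half_pos hr).le]
    linarith
  have := Kf_sub_le hν0 hνh hκ hνt ht (x₀ + (r / 2) • x) x₀
  rw [add_sub_cancel_left, Kf_smul hν0 hνh ht hr₂, abs_of_pos (half_pos hr)] at this
  rw [le_div_iff₀ hr]
  nlinarith [hM _ hmem, hM x₀ (Metric.mem_ball_self hr)]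

end KFunctional

theorem exists_ball_subset_of_forall_bdd {X : Type*} [NormedAddCommGroup X] [NormedSpace ℝ X]
    [CompleteSpace X] {Y : Submodule ℝ X} {ν : X → ℝ} (hν0 : ∀ y ∈ Y, 0 ≤ ν y) {b t : ℕ → ℝ}
    (ht : ∀ n, 0 ≤ t n) (hA : ∀ x, ∃ M : ℝ, ∀ n, b n * Kf Y ν x (t n) ≤ M) :
    ∃ m : ℕ, ∃ x₀ : X, ∃ r > 0, ∀ x ∈ Metric.ball x₀ r, ∀ n, b n * Kf Y ν x (t n) ≤ m := by
  let F : ℕ → Set X := fun m => {x | ∀ n, b n * Kf Y ν x (t n) ≤ m}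
  have hF : ∀ m, IsClosed (F m) := fun m => by
    simp only [F, ofPred_forall]
    exact isClosed_iInter fun n => isClosed_le
      (continuous_const.mul (lipschitzWith_Kf hν0 (ht n)).continuous) continuous_const
  have hcover : ⋃ m, F m = univ := eq_univ_of_forall fun x => by
    obtain ⟨M, hM⟩ := hA x
    exact mem_iUnion.mpr ⟨⌈M⌉₊, fun n => (hM n).trans (Nat.le_ceil M)⟩
  obtain ⟨m, x₀, hx₀⟩ := nonempty_interior_of_iUnion_of_closed hF hcover
  obtain ⟨r, hr, hball⟩ := Metric.isOpen_iff.mp isOpen_interior x₀ hx₀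
  exact ⟨m, x₀, r, hr, fun x hx => interior_subset (hball hx)⟩

theorem stmt_15 {X : Type*} [NormedAddCommGroup X] [NormedSpace ℝ X] [CompleteSpace X]
    (Y : Submodule ℝ X) (ν : X → ℝ)
    -- `ν` is a quasi-semi-norm on `Y`:
    (hν0 : ∀ y ∈ Y, 0 ≤ ν y)
    (hνh : ∀ (c : ℝ), ∀ y ∈ Y, ν (c • y) = |c| * ν y)
    (hνt : ∃ κ : ℝ, 1 ≤ κ ∧ ∀ y ∈ Y, ∀ z ∈ Y, ν (y + z) ≤ κ * (ν y + ν z))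
    -- condition (a): `sup_{‖x‖=1} K(x,t) > c` for all `t ∈ (0,1]`:
    (h : ∃ c > (0 : ℝ), ∀ t ∈ Set.Ioc (0 : ℝ) 1, c < Ksup Y ν t) :
    ∀ b : ℕ → ℝ, (∀ n, 0 ≤ b n) → Tendsto b atTop atTop →
    ∀ t : ℕ → ℝ, StrictAnti t → (∀ n, 0 < t n) → Tendsto t atTop (nhds 0) →
      {x : X | ∃ M : ℝ, ∀ n, b n * Kf Y ν x (t n) ≤ M} ≠ Set.univ := by
  intro b _ hb t _ ht_pos ht hA
  obtain ⟨c, hc, hK⟩ := h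
  obtain ⟨κ, hκ, hνt⟩ := hνt
  obtain ⟨m, x₀, r, hr, hball⟩ := exists_ball_subset_of_forall_bdd hν0 (fun n => (ht_pos n).le)
    fun x => eq_univ_iff_forall.mp hA x
  have hbound : ∀ n, 0 < b n → Ksup Y ν (t n) ≤ 4 * κ * (m / b n) / r := fun n hbn =>
    Ksup_le_of_Kf_le_on_ball hν0 hνh hκ hνt (ht_pos n).le hr fun x hx =>
      (le_div_iff₀' hbn).mpr (hball x hx n)
  have hbound_lim : Tendsto (fun n => 4 * κ * (m / b n) / r) atTop (nhds 0) := by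
    simpa using ((tendsto_const_nhds.div_atTop hb).const_mul (4 * κ)).div_const r
  obtain ⟨n, hbn, htn, hsmall⟩ := ((hb.eventually_gt_atTop 0).and
    ((ht.eventually (eventually_le_nhds one_pos)).and (hbound_lim.eventually_lt_const hc))).exists
  exact (hK (t n) ⟨ht_pos n, htn⟩).not_ge ((hbound n hbn).trans hsmall.le)
end

section
/- Consider X = C[0,1] with the sup norm and Y = C¹[0,1] with norm ‖g‖ = ‖g‖_∞ + ‖g'‖_∞ (or ‖g'‖_∞). For every t ∈ (0,1/2) there exists f ∈ C[0,1] with ‖f‖_∞ = 1 such that K(f,t) ≥ 1/2, where K(f,t) = inf_{g∈C¹}(‖f−g‖_∞ + t‖g‖_{C¹}). Consequently sup_{‖f‖_∞=1} K(f,t) ≥ 1/2 for all t ∈ (0,1/2). -/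
/-- The Peetre `K`-functional for the couple `(C[0,1], C¹[0,1])`, where `C¹[0,1]` carries
the norm `‖g‖_∞ + ‖g'‖_∞`. -/
noncomputable def Kc (f : C(Set.Icc (0 : ℝ) 1, ℝ)) (t : ℝ) : ℝ :=
  sInf {r : ℝ | ∃ G : ℝ → ℝ, ContDiff ℝ 1 G ∧
    r = (⨆ x : Set.Icc (0 : ℝ) 1, |f x - G x|) +
      t * ((⨆ x : Set.Icc (0 : ℝ) 1, |G x|) + ⨆ x : Set.Icc (0 : ℝ) 1, |deriv G x|)}

/-!
If `|f - G| ≤ E` on `[0,1]` and `|b - a| ≤ t`, the mean value theorem gives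
`|f b - f a| ≤ 2E + t‖G'‖_∞`, hence `|f b - f a| ≤ 2 K(f,t)`. The ramp `min 1 (2x/t - 1)` rises
from `-1` at `0` to `1` at `t`, so its `K`-functional is at least `1`. Testing `G = 0` gives
`K(f,t) ≤ ‖f‖_∞`, which bounds the supremum over the unit sphere.
-/

open Set

lemma le_ciSup_of_continuous {X : Type*} [TopologicalSpace X] [CompactSpace X] {h : X → ℝ}
    (hh : Continuous h) (x : X) : h x ≤ ⨆ y, h y :=
  le_ciSup (isCompact_range hh).bddAbove x

noncomputable def KcCost (f : C(Icc (0 : ℝ) 1, ℝ)) (t : ℝ) (G : ℝ → ℝ) : ℝ :=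
  (⨆ x : Icc (0 : ℝ) 1, |f x - G x|) +
    t * ((⨆ x : Icc (0 : ℝ) 1, |G x|) + ⨆ x : Icc (0 : ℝ) 1, |deriv G x|)

namespace KcCost

variable (f : C(Icc (0 : ℝ) 1, ℝ)) {t : ℝ}

lemma nonneg (ht : 0 ≤ t) (G : ℝ → ℝ) : 0 ≤ KcCost f t G := by
  have hE : 0 ≤ ⨆ x : Icc (0 : ℝ) 1, |f x - G x| := Real.iSup_nonneg fun _ => abs_nonneg _
  have hS : 0 ≤ ⨆ x : Icc (0 : ℝ) 1, |G x| := Real.iSup_nonneg fun _ => abs_nonneg _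
  have hD : 0 ≤ ⨆ x : Icc (0 : ℝ) 1, |deriv G x| := Real.iSup_nonneg fun _ => abs_nonneg _
  unfold KcCost
  positivity

lemma zero_eq_norm : KcCost f t 0 = ‖f‖ := by
  simp [KcCost, ContinuousMap.norm_eq_iSup_norm, Real.norm_eq_abs]

lemma abs_sub_le_two_mul {G : ℝ → ℝ} (hG : ContDiff ℝ 1 G) {a b : Icc (0 : ℝ) 1}
    (hab : |(b : ℝ) - a| ≤ t) : |f b - f a| ≤ 2 * KcCost f t G := by
  set E := ⨆ x : Icc (0 : ℝ) 1, |f x - G x|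
  set D := ⨆ x : Icc (0 : ℝ) 1, |deriv G x|
  have hfG (x : Icc (0 : ℝ) 1) : |f x - G x| ≤ E :=
    le_ciSup_of_continuous (f.continuous.sub (hG.continuous.comp continuous_subtype_val)).abs x
  have hG' (x : ℝ) (hx : x ∈ Icc (0 : ℝ) 1) : ‖deriv G x‖ ≤ D :=
    le_ciSup_of_continuous ((hG.continuous_deriv le_rfl).comp continuous_subtype_val).abs ⟨x, hx⟩
  have hGab : |G b - G a| ≤ D * |(b : ℝ) - a| :=
    (convex_Icc 0 1).norm_image_sub_le_of_norm_deriv_le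
      (fun x _ => (hG.differentiable one_ne_zero).differentiableAt) hG' a.2 b.2
  have hD : 0 ≤ D := Real.iSup_nonneg fun _ => abs_nonneg _
  have hS : 0 ≤ ⨆ x : Icc (0 : ℝ) 1, |G x| := Real.iSup_nonneg fun _ => abs_nonneg _
  have ht : 0 ≤ t := (abs_nonneg _).trans hab
  calc |f b - f a| ≤ 2 * E + D * |(b : ℝ) - a| := by
        have ha := abs_le.mp (hfG a)
        have hb := abs_le.mp (hfG b)
        rw [abs_le] at hGab ⊢
        constructor <;> linarith
    _ ≤ 2 * E + D * t := by gcongr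
    _ ≤ 2 * KcCost f t G := by
        unfold KcCost
        linarith [mul_nonneg ht hS, mul_nonneg ht hD]

end KcCost

namespace Kc

variable (f : C(Icc (0 : ℝ) 1, ℝ)) {t : ℝ}

lemma eq_sInf_KcCost : Kc f t = sInf {r | ∃ G : ℝ → ℝ, ContDiff ℝ 1 G ∧ r = KcCost f t G} :=
  rfl

lemma le_norm (ht : 0 ≤ t) : Kc f t ≤ ‖f‖ := by
  rw [eq_sInf_KcCost, ← KcCost.zero_eq_norm f (t := t)]
  refine csInf_le ⟨0, ?_⟩ ⟨0, contDiff_const, rfl⟩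
  rintro r ⟨G, -, rfl⟩
  exact KcCost.nonneg f ht G

lemma abs_sub_le_two_mul {a b : Icc (0 : ℝ) 1} (hab : |(b : ℝ) - a| ≤ t) :
    |f b - f a| ≤ 2 * Kc f t := by
  rw [eq_sInf_KcCost, ← div_le_iff₀' two_pos]
  refine le_csInf ⟨_, 0, contDiff_const, rfl⟩ ?_
  rintro r ⟨G, hG, rfl⟩
  rw [div_le_iff₀' two_pos]
  exact KcCost.abs_sub_le_two_mul f hG hab

end Kc

noncomputable def ramp (t : ℝ) : C(Icc (0 : ℝ) 1, ℝ) :=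
  ⟨fun x => min 1 (2 * x / t - 1), by fun_prop⟩

section ramp

variable {t : ℝ}

@[simp]
lemma ramp_apply (x : Icc (0 : ℝ) 1) : ramp t x = min 1 (2 * x / t - 1) :=
  rfl

lemma ramp_apply_zero : ramp t ⟨0, left_mem_Icc.2 zero_le_one⟩ = -1 := by
  norm_num

lemma ramp_apply_self (ht : t ≠ 0) (hmem : t ∈ Icc (0 : ℝ) 1) : ramp t ⟨t, hmem⟩ = 1 := by
  norm_num [mul_div_assoc, div_self ht]

lemma norm_ramp (hmem : t ∈ Icc (0 : ℝ) 1) (ht : t ≠ 0) : ‖ramp t‖ = 1 := by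
  refine le_antisymm ((ContinuousMap.norm_le _ zero_le_one).2 fun x => ?_) ?_
  · have : 0 ≤ 2 * (x : ℝ) / t := div_nonneg (by linarith [x.2.1]) hmem.1
    rw [ramp_apply, Real.norm_eq_abs, abs_le]
    exact ⟨le_min (by norm_num) (by linarith), min_le_left _ _⟩
  · simpa [ramp_apply_self ht hmem] using (ramp t).norm_coe_le_norm ⟨t, hmem⟩

end ramp

theorem stmt_18 :
    ∀ t : ℝ, 0 < t → t < 1 / 2 →
      (∃ f : C(Set.Icc (0 : ℝ) 1, ℝ), ‖f‖ = 1 ∧ 1 / 2 ≤ Kc f t) ∧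
      1 / 2 ≤ sSup {r : ℝ | ∃ f : C(Set.Icc (0 : ℝ) 1, ℝ), ‖f‖ = 1 ∧ r = Kc f t} := by
  intro t ht ht_half
  have hmem : t ∈ Icc (0 : ℝ) 1 := ⟨ht.le, by linarith⟩
  have hK : 1 ≤ Kc (ramp t) t := by
    have := Kc.abs_sub_le_two_mul (ramp t) (t := t) (a := ⟨0, left_mem_Icc.2 zero_le_one⟩)
      (b := ⟨t, hmem⟩) (by simp [abs_of_pos ht])
    rw [ramp_apply_zero, ramp_apply_self ht.ne' hmem] at this
    norm_num at this
    linarith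
  have hbdd : BddAbove {r : ℝ | ∃ f : C(Icc (0 : ℝ) 1, ℝ), ‖f‖ = 1 ∧ r = Kc f t} := by
    refine ⟨1, ?_⟩
    rintro r ⟨f, hf, rfl⟩
    exact hf ▸ Kc.le_norm f ht.le
  have hramp := norm_ramp hmem ht.ne'
  exact ⟨⟨ramp t, hramp, by linarith⟩, by linarith [le_csSup hbdd ⟨ramp t, hramp, rfl⟩]⟩
end
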